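/- arXiv:2209.00473 — 2 statements merged into one kernel-verified Lean document; each statement's English description precedes it below -/
import Mathlib

section
/- For every natural number ℓ ≥ 2, the rational number ∑_{p=1}^{ℓ} (1/p) · ∑_{j=1}^{p} (-1)^j · C(p,j) · j^ℓ equals 0, while for ℓ = 1 it equals −1. -/
/-!
Absorbing `j / p · C(p, j) = C(p - 1, j - 1)` turns the `p`-th summand into
`-(-1)^m Δ^m f(1)` with `m = p - 1` and `f x = x^(ℓ-1)`. Since `Δ^m f(1) = Δ^m f(0) + Δ^(m+1) f(0)`,
the sum over `p` telescopes to `(-1)^ℓ Δ^ℓ f(0) - f(0)`, and `Δ^ℓ` kills the polynomial `f`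
of degree `ℓ - 1`, leaving `-0^(ℓ-1)`.
-/

open Finset fwdDiff

theorem Finset.sum_Icc_one_eq_sum_range {M : Type*} [AddCommMonoid M] (f : ℕ → M) (n : ℕ) :
    ∑ j ∈ Icc 1 n, f j = ∑ i ∈ range n, f (i + 1) := by
  rw [range_eq_Ico, sum_Ico_add' f 0 n 1, zero_add, Ico_add_one_right_eq_Icc]

section

variable {R : Type*} [CommRing R]

theorem alternating_sum_choose_shift_eq_fwdDiff_iter (f : R → R) (n : ℕ) (y : R) :
    ∑ i ∈ range (n + 1), (-1) ^ i * n.choose i * f (y + i) = (-1) ^ n * Δ_[1] ^[n] f y := by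
  rw [fwdDiff_iter_eq_sum_shift, mul_sum]
  refine sum_congr rfl fun i hi => ?_
  obtain ⟨d, rfl⟩ := Nat.exists_eq_add_of_le (Nat.lt_succ_iff.mp (mem_range.mp hi))
  have sign : (-1 : R) ^ (i + d) * (-1) ^ d = (-1) ^ i := by
    rw [pow_add, mul_assoc, ← mul_pow]
    simp
  simp only [Nat.add_sub_cancel_left, zsmul_eq_mul, nsmul_one]
  push_cast
  linear_combination -((i + d).choose i * f (y + i)) * sign

theorem sum_Icc_neg_one_pow_mul_choose_mul_pow_succ (m k : ℕ) :
    ∑ j ∈ Icc 1 (m + 1), (-1 : R) ^ j * (m + 1).choose j * (j : R) ^ (k + 1) =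
      -(m + 1) * ∑ i ∈ range (m + 1), (-1) ^ i * m.choose i * (1 + i : R) ^ k := by
  rw [sum_Icc_one_eq_sum_range, mul_sum]
  refine sum_congr rfl fun i _ => ?_
  have absorb : ((m + 1).choose (i + 1) : R) * (i + 1) = (m + 1) * m.choose i := by
    simpa using congrArg (Nat.cast : ℕ → R) (Nat.add_one_mul_choose_eq m i).symm
  push_cast
  linear_combination (-1) ^ (i + 1) * (i + 1 : R) ^ k * absorb

end

theorem sum_inv_p_alternating_binomial_general (ℓ : ℕ) :
    ∑ p ∈ Finset.Icc 1 ℓ, (1 / (p : ℚ)) *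
        ∑ j ∈ Finset.Icc 1 p, (-1 : ℚ) ^ j * (p.choose j : ℚ) * (j : ℚ) ^ ℓ
      = if ℓ = 1 then -1 else 0 := by
  obtain _ | k := ℓ
  · simp
  set f : ℚ → ℚ := fun x => x ^ k
  let a (m : ℕ) : ℚ := (-1) ^ m * Δ_[1] ^[m] f 0
  have term (m : ℕ) : 1 / ((m + 1 : ℕ) : ℚ) *
      ∑ j ∈ Icc 1 (m + 1), (-1 : ℚ) ^ j * ((m + 1).choose j : ℚ) * (j : ℚ) ^ (k + 1) =
      a (m + 1) - a m := by
    have step : Δ_[1] ^[m + 1] f 0 = Δ_[1] ^[m] f 1 - Δ_[1] ^[m] f 0 := by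
      rw [Function.iterate_succ_apply', fwdDiff, zero_add]
    rw [sum_Icc_neg_one_pow_mul_choose_mul_pow_succ, alternating_sum_choose_shift_eq_fwdDiff_iter f]
    simp only [a, step]
    push_cast
    field_simp
    ring
  rw [sum_Icc_one_eq_sum_range, sum_congr rfl fun m _ => term m, sum_range_sub]
  simp only [a, f, fwdDiff_iter_pow_eq_zero_of_lt k.lt_succ_self]
  cases k <;> simp

theorem sum_inv_p_alternating_binomial (ℓ : ℕ) (hℓ : 1 ≤ ℓ) :
    ∑ p ∈ Finset.Icc 1 ℓ, (1 / (p : ℚ)) *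
        ∑ j ∈ Finset.Icc 1 p, (-1 : ℚ) ^ j * (p.choose j : ℚ) * (j : ℚ) ^ ℓ
      = if ℓ = 1 then -1 else 0 :=
  sum_inv_p_alternating_binomial_general ℓ
end

section
/- Let I be a finite set, R a commutative ring, and f, g : P(I) → R functions on subsets of I. Then ∑_{K ⊆ I} (-1)^{|K|} f(K) g(K) = ∑_{J ⊆ I} (∑_{A ⊆ J} (-1)^{|A|} f(A)) · (∑_{B ⊆ I∖J} (-1)^{|B|} g(J ∪ B)). -/
open Finset

private lemma neg_one_powerset_sum {ι : Type*} [DecidableEq ι] {R : Type*} [CommRing R]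
    (x : Finset ι) :
    (∑ m ∈ x.powerset, (-1 : R) ^ m.card) = if x = ∅ then 1 else 0 := by
  have h := Finset.sum_powerset_neg_one_pow_card (x := x)
  have h2 := congrArg (Int.cast : ℤ → R) h
  push_cast at h2
  simpa using h2

/-- The bracket of a product of invariants decomposes as a sum over splittings of the
index set. -/
theorem bracket_product_decomposition {ι : Type*} [DecidableEq ι] {R : Type*} [CommRing R]
    (I : Finset ι) (f g : Finset ι → R) :
    ∑ K ∈ I.powerset, (-1 : R) ^ K.card * f K * g K
      = ∑ J ∈ I.powerset,
          (∑ A ∈ J.powerset, (-1 : R) ^ A.card * f A) *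
          (∑ B ∈ (I \ J).powerset, (-1 : R) ^ B.card * g (J ∪ B)) := by
  symm
  calc
    ∑ J ∈ I.powerset,
        (∑ A ∈ J.powerset, (-1 : R) ^ A.card * f A) *
        (∑ B ∈ (I \ J).powerset, (-1 : R) ^ B.card * g (J ∪ B))
      = ∑ J ∈ I.powerset, ∑ K ∈ I.powerset.filter (fun K => J ⊆ K),
          (∑ A ∈ J.powerset, (-1 : R) ^ A.card * f A) *
          ((-1 : R) ^ (K \ J).card * g K) := by
        refine sum_congr rfl fun J hJ => ?_
        rw [mem_powerset] at hJ
        rw [mul_sum]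
        refine sum_bij' (fun B _ => J ∪ B) (fun K _ => K \ J) ?_ ?_ ?_ ?_ ?_
        · intro B hB
          rw [mem_powerset] at hB
          rw [mem_filter, mem_powerset]
          exact ⟨union_subset hJ (hB.trans (sdiff_subset)), subset_union_left⟩
        · intro K hK
          rw [mem_filter, mem_powerset] at hK
          rw [mem_powerset]
          exact sdiff_subset_sdiff hK.1 (Subset.refl J)
        · intro B hB
          rw [mem_powerset] at hB
          have hd : Disjoint J B := disjoint_of_subset_right hB sdiff_disjoint.symm
          exact union_sdiff_cancel_left hd
        · intro K hK
          rw [mem_filter, mem_powerset] at hK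
          exact union_sdiff_of_subset hK.2
        · intro B hB
          rw [mem_powerset] at hB
          have hd : Disjoint J B := disjoint_of_subset_right hB sdiff_disjoint.symm
          rw [union_sdiff_cancel_left hd]
    _ = ∑ K ∈ I.powerset, ∑ J ∈ K.powerset,
          (∑ A ∈ J.powerset, (-1 : R) ^ A.card * f A) *
          ((-1 : R) ^ (K \ J).card * g K) := by
        refine sum_comm' fun J K => ?_
        simp only [mem_powerset, mem_filter]
        constructor
        · rintro ⟨h1, h2, h3⟩; exact ⟨h3, h2⟩
        · rintro ⟨h1, h2⟩; exact ⟨h1.trans h2, h2, h1⟩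
    _ = ∑ K ∈ I.powerset, (-1 : R) ^ K.card * f K * g K := by
        refine sum_congr rfl fun K _ => ?_
        calc
          ∑ J ∈ K.powerset,
              (∑ A ∈ J.powerset, (-1 : R) ^ A.card * f A) *
              ((-1 : R) ^ (K \ J).card * g K)
            = ∑ J ∈ K.powerset, ∑ A ∈ J.powerset,
                (-1 : R) ^ A.card * f A * ((-1 : R) ^ (K \ J).card * g K) := by
              refine sum_congr rfl fun J _ => ?_
              rw [sum_mul]
          _ = ∑ A ∈ K.powerset, ∑ J ∈ K.powerset.filter (fun J => A ⊆ J),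
                (-1 : R) ^ A.card * f A * ((-1 : R) ^ (K \ J).card * g K) := by
              refine sum_comm' fun J A => ?_
              simp only [mem_powerset, mem_filter]
              constructor
              · rintro ⟨h1, h2⟩; exact ⟨⟨h1, h2⟩, h2.trans h1⟩
              · rintro ⟨⟨h1, h2⟩, h3⟩; exact ⟨h1, h2⟩
          _ = ∑ A ∈ K.powerset,
                (if A = K then (-1 : R) ^ A.card * f A * g K else 0) := by
              refine sum_congr rfl fun A hA => ?_
              rw [mem_powerset] at hA
              have hsum : ∑ J ∈ K.powerset.filter (fun J => A ⊆ J),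
                  ((-1 : R) ^ (K \ J).card) = if K \ A = ∅ then 1 else 0 := by
                rw [← neg_one_powerset_sum (K \ A)]
                refine sum_bij' (fun J _ => K \ J) (fun C _ => K \ C) ?_ ?_ ?_ ?_ ?_
                · intro J hJ
                  rw [mem_filter, mem_powerset] at hJ
                  rw [mem_powerset]
                  exact sdiff_subset_sdiff (Subset.refl K) hJ.2
                · intro C hC
                  rw [mem_powerset] at hC
                  rw [mem_filter, mem_powerset]
                  refine ⟨sdiff_subset, ?_⟩
                  intro a ha
                  rw [mem_sdiff]
                  refine ⟨hA ha, fun hc => ?_⟩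
                  exact (mem_sdiff.mp (hC hc)).2 ha
                · intro J hJ
                  rw [mem_filter, mem_powerset] at hJ
                  exact Finset.sdiff_sdiff_eq_self hJ.1
                · intro C hC
                  rw [mem_powerset] at hC
                  exact Finset.sdiff_sdiff_eq_self (hC.trans sdiff_subset)
                · intro J hJ
                  rfl
              calc
                ∑ J ∈ K.powerset.filter (fun J => A ⊆ J),
                    (-1 : R) ^ A.card * f A * ((-1 : R) ^ (K \ J).card * g K)
                  = (-1 : R) ^ A.card * f A * g K *
                      ∑ J ∈ K.powerset.filter (fun J => A ⊆ J),
                        ((-1 : R) ^ (K \ J).card) := by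
                    rw [mul_sum]
                    refine sum_congr rfl fun J _ => ?_
                    ring
                _ = (if A = K then (-1 : R) ^ A.card * f A * g K else 0) := by
                    rw [hsum]
                    by_cases h : A = K
                    · subst h
                      rw [if_pos (Finset.sdiff_self A), if_pos rfl, mul_one]
                    · have hne : K \ A ≠ ∅ := fun he =>
                        h (Subset.antisymm hA (sdiff_eq_empty_iff_subset.mp he))
                      rw [if_neg hne, if_neg h, mul_zero]
          _ = (-1 : R) ^ K.card * f K * g K := by
              rw [sum_ite_eq' K.powerset K
                (fun A => (-1 : R) ^ A.card * f A * g K)]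
              rw [if_pos (mem_powerset_self K)]
end
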